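/- arXiv:1711.08582 — 4 statements merged into one kernel-verified Lean document; each statement's English description precedes it below -/
import Mathlib

section
/- With F, G, Φ_h as above, there exists C > 0 such that for all u₁, u₂ ∈ B_r(0) and all h > 0 sufficiently small, |Φ_h(u₂) − Φ_h(u₁) − (u₂ − u₁)| ≤ C·h·γ·|u₂ − u₁|, where γ = ‖G‖_{W^{1,∞}(B_r(0))}. -/
/-!
Write `Φ_h uᵢ = uᵢ + wᵢ`. An estimate `m ‖x - y‖ ≤ ‖F x - F y‖` on the ball (from the invertibility
of `DF` near the diagonal, from injectivity and compactness away from it) gives `‖wᵢ‖ ≤ h γ / m`.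
Since `F (Φ_h u₂) - F (Φ_h u₁) - (F u₂ - F u₁) = h (G u₂ - G u₁)`, a second-order mean value
estimate for `F`, whose derivative is Lipschitz, shows that `DF u₂ (w₂ - w₁)` has norm at most
`h γ ‖u₂ - u₁‖ + O(h γ) (‖u₂ - u₁‖ + ‖w₂ - w₁‖)`; inverting `DF u₂` and absorbing the
`‖w₂ - w₁‖` term for small `h` gives the bound.
-/

open Metric Set
open scoped NNReal

theorem IsCompact.exists_pos_mul_norm_sub_le {X Y : Type*} [NormedAddCommGroup X]
    [NormedAddCommGroup Y] {f : X → Y} {s : Set X} (hs : IsCompact s) (hf : ContinuousOn f s)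
    (hinj : InjOn f s) {ε c : ℝ} (hε : 0 < ε) (hc : 0 < c)
    (hloc : ∀ x ∈ s, ∀ y ∈ s, ‖x - y‖ ≤ ε → c * ‖x - y‖ ≤ ‖f x - f y‖) :
    ∃ m > 0, ∀ x ∈ s, ∀ y ∈ s, m * ‖x - y‖ ≤ ‖f x - f y‖ := by
  set T := s ×ˢ s ∩ {p : X × X | ε ≤ ‖p.1 - p.2‖}
  have hT : IsCompact T :=
    (hs.prod hs).inter_right (isClosed_le continuous_const (continuous_fst.sub continuous_snd).norm)
  have hpos : ∀ p ∈ T, 0 < ‖p.1 - p.2‖ := fun p hp => hε.trans_le hp.2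
  have hcont : ContinuousOn (fun p : X × X => ‖f p.1 - f p.2‖ / ‖p.1 - p.2‖) T :=
    ((hf.comp continuousOn_fst fun p hp => hp.1.1).sub
      (hf.comp continuousOn_snd fun p hp => hp.1.2)).norm.div
      (continuous_fst.sub continuous_snd).norm.continuousOn fun p hp => (hpos p hp).ne'
  have hquot : ∀ p ∈ T, 0 < ‖f p.1 - f p.2‖ / ‖p.1 - p.2‖ := fun p hp => by
    have hne : p.1 ≠ p.2 := sub_ne_zero.1 (norm_pos_iff.1 (hpos p hp))
    exact div_pos (norm_pos_iff.2 (sub_ne_zero.2 fun h => hne (hinj hp.1.1 hp.1.2 h))) (hpos p hp)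
  obtain ⟨a, ha, haT⟩ := hT.exists_forall_le' hcont hquot
  refine ⟨min c a, lt_min hc ha, fun x hx y hy => ?_⟩
  rcases le_or_gt ‖x - y‖ ε with hxy | hxy
  · exact (mul_le_mul_of_nonneg_right (min_le_left _ _) (norm_nonneg _)).trans
      (hloc x hx y hy hxy)
  · have hfar := haT (x, y) ⟨⟨hx, hy⟩, hxy.le⟩
    rw [le_div_iff₀ (hε.trans hxy)] at hfar
    exact (mul_le_mul_of_nonneg_right (min_le_right _ _) (norm_nonneg _)).trans hfar

section

variable {E E' : Type*} [NormedAddCommGroup E] [NormedSpace ℝ E]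
  [NormedAddCommGroup E'] [NormedSpace ℝ E']

theorem ContDiffOn.exists_lipschitzOnWith_of_hasFDerivWithinAt {f : E → E'}
    {f' : E → E →L[ℝ] E'} {s : Set E} (hf : ContDiffOn ℝ 2 f s) (hs : Convex ℝ s)
    (hsc : IsCompact s) (hs' : UniqueDiffOn ℝ s)
    (hf' : ∀ x ∈ s, HasFDerivWithinAt f (f' x) s x) : ∃ K, LipschitzOnWith K f' s := by
  obtain ⟨K, hK⟩ :=
    (hf.fderivWithin hs' (m := 1) (by norm_num)).exists_lipschitzOnWith one_ne_zero hs hsc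
  refine ⟨K, fun x hx y hy => ?_⟩
  rw [← (hf' x hx).fderivWithin (hs' x hx), ← (hf' y hy).fderivWithin (hs' y hy)]
  exact hK hx hy

theorem IsCompact.exists_norm_le_mul_norm_apply {X : Type*} [TopologicalSpace X]
    [CompleteSpace E] {s : Set X} (hs : IsCompact s) {A : X → E ≃L[ℝ] E'}
    (hA : ContinuousOn (fun x => (A x : E →L[ℝ] E')) s) :
    ∃ M > 0, ∀ x ∈ s, ∀ v, ‖v‖ ≤ M * ‖A x v‖ := by
  have hinv : ContinuousOn (fun x => ((A x).symm : E' →L[ℝ] E)) s := fun x hx => by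
    simpa [Function.comp_def] using
      (contDiffAt_map_inverse (n := 0) (A x)).continuousAt.comp_continuousWithinAt
        (f := fun x => (A x : E →L[ℝ] E')) (hA x hx)
  obtain ⟨M, hM⟩ := hs.exists_bound_of_continuousOn hinv
  refine ⟨max M 1, by positivity, fun x hx v => ?_⟩
  calc ‖v‖ = ‖((A x).symm : E' →L[ℝ] E) (A x v)‖ := by simp
    _ ≤ ‖((A x).symm : E' →L[ℝ] E)‖ * ‖A x v‖ := ContinuousLinearMap.le_opNorm _ _
    _ ≤ max M 1 * ‖A x v‖ := by gcongr; exact (hM x hx).trans (le_max_left _ _)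

theorem norm_sub_sub_sub_fderiv_le_of_lipschitzOnWith {f : E → E'} {f' : E → E →L[ℝ] E'}
    {s : Set E} {K : ℝ≥0} (hs : Convex ℝ s) (hf : ∀ x ∈ s, HasFDerivAt f (f' x) x)
    (hK : LipschitzOnWith K f' s) {u₁ u₂ w₁ w₂ : E} (hu₁ : u₁ ∈ s) (hu₂ : u₂ ∈ s)
    (hv₁ : u₁ + w₁ ∈ s) (hv₂ : u₂ + w₂ ∈ s) {δ : ℝ} (hw₁ : ‖w₁‖ ≤ δ) (hw₂ : ‖w₂‖ ≤ δ) :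
    ‖f (u₂ + w₂) - f (u₁ + w₁) - (f u₂ - f u₁) - f' u₂ (w₂ - w₁)‖ ≤
      K * δ * (‖u₂ - u₁‖ + 2 * ‖w₂ - w₁‖) := by
  set c := f' u₂ (w₂ - w₁)
  have hline : ∀ {u w}, u ∈ s → u + w ∈ s → ∀ t ∈ Icc (0 : ℝ) 1,
      HasDerivAt (fun t : ℝ => f (u + t • w)) (f' (u + t • w) w) t := fun hu huw t ht => by
    simpa [Function.comp_def] using (hf _ (hs.add_smul_mem hu huw ht)).comp_hasDerivAt t
      (((hasDerivAt_id t).smul_const _).const_add _)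
  have hderiv : ∀ t ∈ Icc (0 : ℝ) 1,
      HasDerivWithinAt (fun t : ℝ => f (u₂ + t • w₂) - f (u₁ + t • w₁) - t • c)
        (f' (u₂ + t • w₂) w₂ - f' (u₁ + t • w₁) w₁ - c) (Icc 0 1) t := fun t ht =>
    (((hline hu₂ hv₂ t ht).sub (hline hu₁ hv₁ t ht)).sub
      (by simpa using (hasDerivAt_id t).smul_const c)).hasDerivWithinAt
  have hbound : ∀ t ∈ Ico (0 : ℝ) 1, ‖f' (u₂ + t • w₂) w₂ - f' (u₁ + t • w₁) w₁ - c‖ ≤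
      K * δ * (‖u₂ - u₁‖ + 2 * ‖w₂ - w₁‖) := by
    rintro t ⟨ht₀, ht₁⟩
    have hshrink : ∀ w : E, ‖t • w‖ ≤ ‖w‖ := fun w => by
      rw [norm_smul, Real.norm_of_nonneg ht₀]
      exact mul_le_of_le_one_left (norm_nonneg _) ht₁.le
    have hx := hs.add_smul_mem hu₂ hv₂ ⟨ht₀, ht₁.le⟩
    have hy := hs.add_smul_mem hu₁ hv₁ ⟨ht₀, ht₁.le⟩
    -- This splitting makes the error proportional to `‖u₂ - u₁‖ + ‖w₂ - w₁‖` rather than to `δ`,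
    -- which is what lets the error be absorbed in the end.
    have hsplit : f' (u₂ + t • w₂) w₂ - f' (u₁ + t • w₁) w₁ - c =
        (f' (u₂ + t • w₂) - f' u₂) (w₂ - w₁) + (f' (u₂ + t • w₂) - f' (u₁ + t • w₁)) w₁ := by
      simp only [c, sub_apply, map_sub]
      abel
    have h₁ : ‖f' (u₂ + t • w₂) - f' u₂‖ ≤ K * δ := calc
      _ ≤ K * ‖u₂ + t • w₂ - u₂‖ := hK.norm_sub_le hx hu₂
      _ ≤ K * δ := by gcongr; simpa using (hshrink w₂).trans hw₂
    have h₂ : ‖f' (u₂ + t • w₂) - f' (u₁ + t • w₁)‖ ≤ K * (‖u₂ - u₁‖ + ‖w₂ - w₁‖) := calc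
      _ ≤ K * ‖u₂ + t • w₂ - (u₁ + t • w₁)‖ := hK.norm_sub_le hx hy
      _ = K * ‖(u₂ - u₁) + t • (w₂ - w₁)‖ := by rw [smul_sub]; congr 2; abel
      _ ≤ K * (‖u₂ - u₁‖ + ‖w₂ - w₁‖) := by
        gcongr; exact (norm_add_le _ _).trans (add_le_add_right (hshrink _) _)
    rw [hsplit]
    calc _ ≤ ‖f' (u₂ + t • w₂) - f' u₂‖ * ‖w₂ - w₁‖ +
          ‖f' (u₂ + t • w₂) - f' (u₁ + t • w₁)‖ * ‖w₁‖ :=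
          (norm_add_le _ _).trans (add_le_add (ContinuousLinearMap.le_opNorm _ _)
            (ContinuousLinearMap.le_opNorm _ _))
      _ ≤ K * δ * ‖w₂ - w₁‖ + K * (‖u₂ - u₁‖ + ‖w₂ - w₁‖) * δ := by gcongr
      _ = K * δ * (‖u₂ - u₁‖ + 2 * ‖w₂ - w₁‖) := by ring
  convert norm_image_sub_le_of_norm_deriv_le_segment_01' hderiv hbound using 2
  simp only [one_smul, zero_smul, add_zero]
  abel

theorem norm_sub_le_two_mul_norm_sub_of_lipschitzOnWith {f : E → E'} {f' : E → E →L[ℝ] E'}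
    {s : Set E} {K : ℝ≥0} {M : ℝ} (hs : Convex ℝ s) (hf : ∀ x ∈ s, HasFDerivAt f (f' x) x)
    (hK : LipschitzOnWith K f' s) (hM₀ : 0 ≤ M) (hM : ∀ x ∈ s, ∀ v, ‖v‖ ≤ M * ‖f' x v‖)
    {x y : E} (hx : x ∈ s) (hy : y ∈ s) (hxy : 4 * M * K * ‖x - y‖ ≤ 1) :
    ‖x - y‖ ≤ 2 * M * ‖f x - f y‖ := by
  have htaylor := norm_sub_sub_sub_fderiv_le_of_lipschitzOnWith hs hf hK hy hy
    (w₁ := 0) (w₂ := x - y) (by simpa) (by simpa) (norm_zero.trans_le (norm_nonneg _)) le_rfl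
  simp only [add_zero, add_sub_cancel, sub_self, sub_zero, norm_zero, zero_add] at htaylor
  have hlin : ‖f' y (x - y)‖ ≤ ‖f x - f y‖ + K * ‖x - y‖ * (2 * ‖x - y‖) :=
    (norm_le_insert' _ _).trans (add_le_add_right (by rwa [norm_sub_rev]) _)
  nlinarith [hM y hy (x - y), mul_le_mul_of_nonneg_left hlin hM₀,
    mul_le_mul_of_nonneg_right hxy (norm_nonneg (x - y))]

theorem exists_pos_mul_norm_sub_le_of_lipschitzOnWith {f : E → E'} {f' : E → E →L[ℝ] E'}
    {s : Set E} {K : ℝ≥0} {M : ℝ} (hs : Convex ℝ s) (hsc : IsCompact s)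
    (hf : ∀ x ∈ s, HasFDerivAt f (f' x) x) (hinj : InjOn f s) (hK : LipschitzOnWith K f' s)
    (hM₀ : 0 < M) (hM : ∀ x ∈ s, ∀ v, ‖v‖ ≤ M * ‖f' x v‖) :
    ∃ m > 0, ∀ x ∈ s, ∀ y ∈ s, m * ‖x - y‖ ≤ ‖f x - f y‖ := by
  refine hsc.exists_pos_mul_norm_sub_le (fun x hx => (hf x hx).continuousAt.continuousWithinAt)
    hinj (ε := 1 / (4 * M * K + 1)) (c := 1 / (2 * M)) (by positivity) (by positivity)
    fun x hx y hy hxy => ?_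
  rw [le_div_iff₀ (by positivity)] at hxy
  rw [div_mul_eq_mul_div, one_mul, div_le_iff₀ (by positivity), mul_comm]
  exact norm_sub_le_two_mul_norm_sub_of_lipschitzOnWith hs hf hK hM₀.le hM hx hy
    (by nlinarith [norm_nonneg (x - y)])

theorem norm_sub_sub_sub_le_of_eq_add_smul {f : E → E'} {f' : E → E →L[ℝ] E'} {g : E → E'}
    {s : Set E} {K : ℝ≥0} {M m γ h : ℝ} (hs : Convex ℝ s) (hf : ∀ x ∈ s, HasFDerivAt f (f' x) x)
    (hK : LipschitzOnWith K f' s) (hM₀ : 0 ≤ M) (hM : ∀ x ∈ s, ∀ v, ‖v‖ ≤ M * ‖f' x v‖)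
    (hm : 0 < m) (hlow : ∀ x ∈ s, ∀ y ∈ s, m * ‖x - y‖ ≤ ‖f x - f y‖)
    (hh : 0 ≤ h) (hsmall : 4 * M * K * (h * γ) ≤ m)
    {u₁ u₂ v₁ v₂ : E} (hu₁ : u₁ ∈ s) (hu₂ : u₂ ∈ s) (hv₁ : v₁ ∈ s) (hv₂ : v₂ ∈ s)
    (hfv₁ : f v₁ = f u₁ + h • g u₁) (hfv₂ : f v₂ = f u₂ + h • g u₂)
    (hg₁ : ‖g u₁‖ ≤ γ) (hg₂ : ‖g u₂‖ ≤ γ) (hg : ‖g u₂ - g u₁‖ ≤ γ * ‖u₂ - u₁‖) :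
    ‖v₂ - v₁ - (u₂ - u₁)‖ ≤ 2 * M * (1 + K / m) * h * γ * ‖u₂ - u₁‖ := by
  set δ := h * γ / m
  have hdisp : ∀ {u v}, u ∈ s → v ∈ s → f v = f u + h • g u → ‖g u‖ ≤ γ → ‖v - u‖ ≤ δ := by
    intro u v hu hv hfv hgu
    rw [le_div_iff₀' hm]
    calc m * ‖v - u‖ ≤ ‖f v - f u‖ := hlow v hv u hu
      _ = h * ‖g u‖ := by rw [hfv, add_sub_cancel_left, norm_smul, Real.norm_of_nonneg hh]
      _ ≤ h * γ := by gcongr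
  have hsecond := norm_sub_sub_sub_fderiv_le_of_lipschitzOnWith hs hf hK hu₁ hu₂
    (w₁ := v₁ - u₁) (w₂ := v₂ - u₂) (by simpa) (by simpa)
    (hdisp hu₁ hv₁ hfv₁ hg₁) (hdisp hu₂ hv₂ hfv₂ hg₂)
  have hw : v₂ - u₂ - (v₁ - u₁) = v₂ - v₁ - (u₂ - u₁) := by abel
  have hfg : f v₂ - f v₁ - (f u₂ - f u₁) = h • (g u₂ - g u₁) := by
    rw [hfv₁, hfv₂, smul_sub]; abel
  simp only [add_sub_cancel, hw, hfg] at hsecond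
  set d := ‖v₂ - v₁ - (u₂ - u₁)‖
  set a := ‖u₂ - u₁‖
  have hlin : ‖f' u₂ (v₂ - v₁ - (u₂ - u₁))‖ ≤ h * γ * a + K * δ * (a + 2 * d) := calc
    _ ≤ ‖h • (g u₂ - g u₁)‖ + ‖h • (g u₂ - g u₁) - f' u₂ (v₂ - v₁ - (u₂ - u₁))‖ :=
      norm_le_insert _ _
    _ ≤ h * γ * a + K * δ * (a + 2 * d) := by
      rw [norm_smul, Real.norm_of_nonneg hh, mul_assoc]
      gcongr
  have hδ : 4 * M * K * δ ≤ 1 := by rwa [mul_div_assoc', div_le_one hm]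
  have hd := (hM u₂ hu₂ _).trans (mul_le_mul_of_nonneg_left hlin hM₀)
  have hrhs : 2 * M * (1 + K / m) * h * γ * a = 2 * M * (h * γ * a) + 2 * M * (K * δ) * a := by
    simp only [δ]; field_simp
  rw [hrhs]
  nlinarith [mul_le_mul_of_nonneg_right hδ (norm_nonneg (v₂ - v₁ - (u₂ - u₁)))]

end

theorem stmt_2_general (n : ℕ) (r r' γ : ℝ) (hr : 0 < r) (hrr' : r < r')
    (F G : EuclideanSpace ℝ (Fin n) → EuclideanSpace ℝ (Fin n))
    (Φ : ℝ → EuclideanSpace ℝ (Fin n) → EuclideanSpace ℝ (Fin n))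
    (DF : EuclideanSpace ℝ (Fin n) →
      (EuclideanSpace ℝ (Fin n) ≃L[ℝ] EuclideanSpace ℝ (Fin n)))
    (hF : ContDiffOn ℝ 2 F (closedBall 0 r'))
    (hDF : ∀ u ∈ closedBall (0 : EuclideanSpace ℝ (Fin n)) r',
      HasFDerivAt F (DF u : EuclideanSpace ℝ (Fin n) →L[ℝ] EuclideanSpace ℝ (Fin n)) u)
    (hFinj : Set.InjOn F (closedBall 0 r'))
    (hγbd : ∀ u ∈ closedBall (0 : EuclideanSpace ℝ (Fin n)) r', ‖G u‖ ≤ γ)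
    (hγlip : ∀ u ∈ closedBall (0 : EuclideanSpace ℝ (Fin n)) r',
      ∀ v ∈ closedBall (0 : EuclideanSpace ℝ (Fin n)) r', ‖G u - G v‖ ≤ γ * ‖u - v‖)
    (h₁ : ℝ) (hh₁ : 0 < h₁)
    (hΦ : ∀ h ∈ Set.Ioo (0 : ℝ) h₁, ∀ u ∈ closedBall (0 : EuclideanSpace ℝ (Fin n)) r,
      Φ h u ∈ closedBall (0 : EuclideanSpace ℝ (Fin n)) r' ∧
        F (Φ h u) = F u + h • G u) :
    ∃ C > (0 : ℝ), ∃ h₀ > (0 : ℝ), ∀ h : ℝ, 0 < h → h < h₀ →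
      ∀ u₁ ∈ closedBall (0 : EuclideanSpace ℝ (Fin n)) r,
      ∀ u₂ ∈ closedBall (0 : EuclideanSpace ℝ (Fin n)) r,
        ‖Φ h u₂ - Φ h u₁ - (u₂ - u₁)‖ ≤ C * h * γ * ‖u₂ - u₁‖ := by
  set s := closedBall (0 : EuclideanSpace ℝ (Fin n)) r'
  have hr' : 0 < r' := hr.trans hrr'
  have hs : Convex ℝ s := convex_closedBall _ _
  have hsc : IsCompact s := isCompact_closedBall _ _
  have hsu : UniqueDiffOn ℝ s :=
    uniqueDiffOn_convex hs (by rw [interior_closedBall _ hr'.ne']; exact nonempty_ball.2 hr')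
  have hsub : closedBall 0 r ⊆ s := closedBall_subset_closedBall hrr'.le
  obtain ⟨K, hK⟩ := hF.exists_lipschitzOnWith_of_hasFDerivWithinAt hs hsc hsu
    fun u hu => (hDF u hu).hasFDerivWithinAt
  obtain ⟨M, hM, hDFinv⟩ := hsc.exists_norm_le_mul_norm_apply hK.continuousOn
  obtain ⟨m, hm, hFlow⟩ :=
    exists_pos_mul_norm_sub_le_of_lipschitzOnWith hs hsc hDF hFinj hK hM hDFinv
  have hγ : 0 ≤ γ := (norm_nonneg _).trans (hγbd 0 (mem_closedBall_self hr'.le))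
  refine ⟨2 * M * (1 + K / m), by positivity, min h₁ (m / (4 * M * K * γ + 1)),
    lt_min hh₁ (by positivity), fun h hh hh₀ u₁ hu₁ u₂ hu₂ => ?_⟩
  have hsmall : 4 * M * K * (h * γ) ≤ m := by
    have hh₀' := hh₀.trans_le (min_le_right _ _)
    rw [lt_div_iff₀ (by positivity)] at hh₀'
    nlinarith
  obtain ⟨hv₁, hFv₁⟩ := hΦ h ⟨hh, hh₀.trans_le (min_le_left _ _)⟩ u₁ hu₁
  obtain ⟨hv₂, hFv₂⟩ := hΦ h ⟨hh, hh₀.trans_le (min_le_left _ _)⟩ u₂ hu₂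
  exact norm_sub_sub_sub_le_of_eq_add_smul hs hDF hK hM.le hDFinv hm hFlow hh.le hsmall
    (hsub hu₁) (hsub hu₂) hv₁ hv₂ hFv₁ hFv₂ (hγbd _ (hsub hu₁)) (hγbd _ (hsub hu₂))
    (hγlip _ (hsub hu₂) _ (hsub hu₁))

/-- The zero-wave map `Φ_h(u) = F⁻¹[F(u) + h·G(u)]` is a small Lipschitz perturbation of the
identity: `‖Φ_h u₂ − Φ_h u₁ − (u₂ − u₁)‖ ≤ C·h·γ·‖u₂ − u₁‖` on `B_r(0)` for small `h`,
`γ = ‖G‖_{W^{1,∞}(B_r(0))}`. -/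
theorem stmt_2 (n : ℕ) (r r' γ : ℝ) (hr : 0 < r) (hrr' : r < r')
    (F G : EuclideanSpace ℝ (Fin n) → EuclideanSpace ℝ (Fin n))
    (Φ : ℝ → EuclideanSpace ℝ (Fin n) → EuclideanSpace ℝ (Fin n))
    (DF : EuclideanSpace ℝ (Fin n) →
      (EuclideanSpace ℝ (Fin n) ≃L[ℝ] EuclideanSpace ℝ (Fin n)))
    (hF : ContDiffOn ℝ 2 F (closedBall 0 r'))
    (hDF : ∀ u ∈ closedBall (0 : EuclideanSpace ℝ (Fin n)) r',
      HasFDerivAt F (DF u : EuclideanSpace ℝ (Fin n) →L[ℝ] EuclideanSpace ℝ (Fin n)) u)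
    (hFinj : Set.InjOn F (closedBall 0 r'))
    (hG : ContDiff ℝ 2 G) (hG0 : G 0 = 0)
    (hγbd : ∀ u ∈ closedBall (0 : EuclideanSpace ℝ (Fin n)) r', ‖G u‖ ≤ γ)
    (hγlip : ∀ u ∈ closedBall (0 : EuclideanSpace ℝ (Fin n)) r',
      ∀ v ∈ closedBall (0 : EuclideanSpace ℝ (Fin n)) r', ‖G u - G v‖ ≤ γ * ‖u - v‖)
    (h₁ : ℝ) (hh₁ : 0 < h₁)
    (hΦ : ∀ h ∈ Set.Ioo (0 : ℝ) h₁, ∀ u ∈ closedBall (0 : EuclideanSpace ℝ (Fin n)) r,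
      Φ h u ∈ closedBall (0 : EuclideanSpace ℝ (Fin n)) r' ∧
        F (Φ h u) = F u + h • G u) :
    ∃ C > (0 : ℝ), ∃ h₀ > (0 : ℝ), ∀ h : ℝ, 0 < h → h < h₀ →
      ∀ u₁ ∈ closedBall (0 : EuclideanSpace ℝ (Fin n)) r,
      ∀ u₂ ∈ closedBall (0 : EuclideanSpace ℝ (Fin n)) r,
        ‖Φ h u₂ - Φ h u₁ - (u₂ - u₁)‖ ≤ C * h * γ * ‖u₂ - u₁‖ :=
  stmt_2_general n r r' γ hr hrr' F G Φ DF hF hDF hFinj hγbd hγlip h₁ hh₁ hΦ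
end

section
/- Let Φ_h(u) = F⁻¹[F(u) + hG(u)] as above, and let Ψ[σ] : B_r(0) → ℝⁿ be a family of C² maps depending C² on the parameter σ ∈ ℝ with Ψ[0] = id. Then there exists C > 0 such that for all u ∈ B_r(0), all σ with |σ| sufficiently small, and all h > 0 sufficiently small, |Φ_h(Ψ[σ](u)) − Ψ[σ](Φ_h(u))| ≤ C·|σ|·h·γ. -/
/-!
Write `v = Φ_h u` and `D = F ∘ Ψ[σ] - F`. The defining relation `F ∘ Φ_h = F + h G` gives
`F(Φ_h(Ψ[σ] u)) - F(Ψ[σ](Φ_h u)) = D u - D v + h (G(Ψ[σ] u) - G u)`.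
Since `Ψ[0] = id`, the derivative of `D` is `O(|σ|)` and `Ψ[σ] u - u = O(|σ|)`, while
`‖u - v‖ = O(h γ)`; both terms are therefore `O(|σ| h γ)`. Finally `F` is anti-Lipschitz on the
ball: it is injective there and, by the inverse function theorem, locally anti-Lipschitz, and
compactness makes the local constants uniform.
-/

open Metric Set Filter Topology
open scoped NNReal

theorem IsCompact.exists_dist_le_mul_dist_of_injOn {X Y : Type*} [MetricSpace X] [MetricSpace Y]
    {f : X → Y} {K : Set X} (hK : IsCompact K) (hf : ContinuousOn f K) (hinj : InjOn f K)
    (hloc : ∀ x ∈ K, ∃ C : ℝ≥0, ∃ s, IsOpen s ∧ x ∈ s ∧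
      ∀ a ∈ s, ∀ b ∈ s, dist a b ≤ C * dist (f a) (f b)) :
    ∃ C : ℝ≥0, ∀ a ∈ K, ∀ b ∈ K, dist a b ≤ C * dist (f a) (f b) := by
  cases isEmpty_or_nonempty X
  · exact ⟨0, fun a => isEmptyElim a⟩
  have hg : LocallyLipschitzOn (f '' K) (Function.invFunOn f K) := by
    rintro _ ⟨x, hx, rfl⟩
    obtain ⟨C, s, hs, hxs, hC⟩ := hloc x hx
    -- `f '' (K \ s)` is compact and misses `f x`, so `f '' (K ∩ s)` is a neighbourhood of
    -- `f x` within `f '' K`.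
    have hfar : (f '' (K \ s))ᶜ ∈ 𝓝 (f x) := by
      refine ((hK.diff hs).image_of_continuousOn (hf.mono sdiff_subset)).isClosed.isOpen_compl
        |>.mem_nhds ?_
      rintro ⟨y, ⟨hy, hys⟩, hyx⟩
      exact hys (hinj hy hx hyx ▸ hxs)
    refine ⟨C, f '' (K ∩ s), mem_of_superset (inter_mem_nhdsWithin _ hfar) ?_, ?_⟩
    · rintro _ ⟨⟨y, hy, rfl⟩, hy'⟩
      exact ⟨y, ⟨hy, by_contra fun hys => hy' ⟨y, ⟨hy, hys⟩, rfl⟩⟩, rfl⟩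
    · refine LipschitzOnWith.of_dist_le_mul ?_
      rintro _ ⟨a, ⟨ha, has⟩, rfl⟩ _ ⟨b, ⟨hb, hbs⟩, rfl⟩
      rw [hinj.leftInvOn_invFunOn ha, hinj.leftInvOn_invFunOn hb]
      exact hC a has b hbs
  obtain ⟨C, hC⟩ := hg.exists_lipschitzOnWith_of_compact (hK.image_of_continuousOn hf)
  refine ⟨C, fun a ha b hb => ?_⟩
  simpa only [hinj.leftInvOn_invFunOn ha, hinj.leftInvOn_invFunOn hb] using
    hC.dist_le_mul _ (mem_image_of_mem f ha) _ (mem_image_of_mem f hb)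

section InverseFunction

variable {𝕜 E F : Type*} [NontriviallyNormedField 𝕜] [NormedAddCommGroup E] [NormedSpace 𝕜 E]
  [NormedAddCommGroup F] [NormedSpace 𝕜 F]

theorem HasStrictFDerivAt.exists_isOpen_dist_le_mul_dist {f : E → F} {f' : E ≃L[𝕜] F} {a : E}
    (hf : HasStrictFDerivAt f (f' : E →L[𝕜] F) a) :
    ∃ C : ℝ≥0, ∃ s, IsOpen s ∧ a ∈ s ∧ ∀ x ∈ s, ∀ y ∈ s, dist x y ≤ C * dist (f x) (f y) := by
  obtain ⟨s, has, hs, happrox⟩ := hf.approximates_deriv_on_open_nhds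
  have hanti := happrox.antilipschitz <| f'.subsingleton_or_nnnorm_symm_pos.imp id
    fun hN => NNReal.half_lt_self (inv_pos.2 hN).ne'
  exact ⟨_, s, hs, has, fun x hx y hy => hanti.le_mul_dist ⟨x, hx⟩ ⟨y, hy⟩⟩

theorem IsCompact.exists_dist_le_mul_dist_of_hasStrictFDerivAt {f : E → F} {f' : E → E ≃L[𝕜] F}
    {K : Set E} (hK : IsCompact K) (hinj : InjOn f K)
    (hf : ∀ x ∈ K, HasStrictFDerivAt f (f' x : E →L[𝕜] F) x) :
    ∃ C : ℝ≥0, ∀ a ∈ K, ∀ b ∈ K, dist a b ≤ C * dist (f a) (f b) :=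
  hK.exists_dist_le_mul_dist_of_injOn (fun x hx => (hf x hx).continuousAt.continuousWithinAt)
    hinj fun x hx => (hf x hx).exists_isOpen_dist_le_mul_dist

end InverseFunction

section MixedDifference

variable {E₁ E₂ F : Type*} [NormedAddCommGroup E₁] [NormedSpace ℝ E₁]
  [NormedAddCommGroup E₂] [NormedSpace ℝ E₂] [NormedAddCommGroup F] [NormedSpace ℝ F]
  {f : E₁ × E₂ → F}

theorem norm_sub_sub_sub_le_of_norm_fderiv_sub_le {p q : E₁} {s : Set E₂} {C : ℝ}
    (hs : Convex ℝ s) (hf : ∀ w ∈ s, DifferentiableAt ℝ f (p, w) ∧ DifferentiableAt ℝ f (q, w))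
    (hC : ∀ w ∈ s, ‖fderiv ℝ f (p, w) - fderiv ℝ f (q, w)‖ ≤ C) {u v : E₂} (hu : u ∈ s)
    (hv : v ∈ s) : ‖f (p, u) - f (q, u) - (f (p, v) - f (q, v))‖ ≤ C * ‖u - v‖ := by
  have hderiv : ∀ w ∈ s, HasFDerivWithinAt (fun w => f (p, w) - f (q, w))
      ((fderiv ℝ f (p, w)).comp (.inr ℝ E₁ E₂) - (fderiv ℝ f (q, w)).comp (.inr ℝ E₁ E₂)) s w :=
    fun w hw => (((hf w hw).1.hasFDerivAt.comp w (hasFDerivAt_prodMk_right p w)).sub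
      ((hf w hw).2.hasFDerivAt.comp w (hasFDerivAt_prodMk_right q w))).hasFDerivWithinAt
  refine hs.norm_image_sub_le_of_norm_hasFDerivWithin_le hderiv (fun w hw => ?_) hv hu
  rw [← ContinuousLinearMap.sub_comp]
  calc _ ≤ ‖fderiv ℝ f (p, w) - fderiv ℝ f (q, w)‖ * ‖ContinuousLinearMap.inr ℝ E₁ E₂‖ :=
        ContinuousLinearMap.opNorm_comp_le _ _
    _ ≤ C * 1 := by
        gcongr
        exacts [(norm_nonneg _).trans (hC w hw), hC w hw,
          ContinuousLinearMap.norm_inr_le_one ℝ E₁ E₂]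
    _ = C := mul_one C

theorem ContDiffOn.exists_norm_sub_sub_sub_le {U : Set (E₁ × E₂)} (hU : IsOpen U)
    (hf : ContDiffOn ℝ 2 f U) {P : Set E₁} {s : Set E₂} (hP : IsCompact P) (hs : IsCompact s)
    (hs' : Convex ℝ s) (hPs : P ×ˢ s ⊆ U) :
    ∃ M : ℝ≥0, ∀ p ∈ P, ∀ q ∈ P, ∀ u ∈ s, ∀ v ∈ s,
      ‖f (p, u) - f (q, u) - (f (p, v) - f (q, v))‖ ≤ M * ‖p - q‖ * ‖u - v‖ := by
  have hf' : ContDiffOn ℝ 1 (fderiv ℝ f) U := hf.fderiv_of_isOpen hU (by norm_num)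
  have hloc : LocallyLipschitzOn (P ×ˢ s) (fderiv ℝ f) := fun x hx => by
    obtain ⟨K, t, ht, hK⟩ := (hf'.contDiffAt (hU.mem_nhds (hPs hx))).exists_lipschitzOnWith
    exact ⟨K, t, mem_nhdsWithin_of_mem_nhds ht, hK⟩
  obtain ⟨M, hM⟩ := hloc.exists_lipschitzOnWith_of_compact (hP.prod hs)
  have hdiff : ∀ x ∈ P ×ˢ s, DifferentiableAt ℝ f x := fun x hx =>
    (hf.contDiffAt (hU.mem_nhds (hPs hx))).differentiableAt two_ne_zero
  refine ⟨M, fun p hp q hq u hu v hv => norm_sub_sub_sub_le_of_norm_fderiv_sub_le hs'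
    (fun w hw => ⟨hdiff _ (mk_mem_prod hp hw), hdiff _ (mk_mem_prod hq hw)⟩) (fun w hw => ?_) hu hv⟩
  simpa [dist_eq_norm, Prod.dist_eq] using
    hM.dist_le_mul (p, w) (mk_mem_prod hp hw) (q, w) (mk_mem_prod hq hw)

theorem ContDiff.exists_norm_sub_le_mul_norm_sub (hf : ContDiff ℝ 1 f) {P : Set E₁} {s : Set E₂}
    (hP : IsCompact P) (hs : IsCompact s) :
    ∃ L : ℝ≥0, ∀ p ∈ P, ∀ q ∈ P, ∀ u ∈ s, ‖f (p, u) - f (q, u)‖ ≤ L * ‖p - q‖ := by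
  obtain ⟨L, hL⟩ :=
    hf.locallyLipschitz.locallyLipschitzOn.exists_lipschitzOnWith_of_compact (hP.prod hs)
  exact ⟨L, fun p hp q hq u hu => by
    simpa [dist_eq_norm, Prod.dist_eq] using
      hL.dist_le_mul (p, u) (mk_mem_prod hp hu) (q, u) (mk_mem_prod hq hu)⟩

end MixedDifference

theorem norm_comp_sub_comp_le {E : Type*} [NormedAddCommGroup E] [NormedSpace ℝ E]
    {F G Φ Ψ : E → E} {B : Set E} {c M L γ h : ℝ} (hc0 : 0 ≤ c) (hM0 : 0 ≤ M) (hh : 0 ≤ h)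
    (hc : ∀ a ∈ B, ∀ b ∈ B, ‖a - b‖ ≤ c * ‖F a - F b‖)
    (hΦ : ∀ w ∈ B, Φ w ∈ B ∧ F (Φ w) = F w + h • G w) (hΨ : MapsTo Ψ B B)
    (hD : ∀ a ∈ B, ∀ b ∈ B, ‖F (Ψ a) - F a - (F (Ψ b) - F b)‖ ≤ M * ‖a - b‖)
    (hΨid : ∀ w ∈ B, ‖Ψ w - w‖ ≤ L) (hGbd : ∀ w ∈ B, ‖G w‖ ≤ γ)
    (hGlip : ∀ a ∈ B, ∀ b ∈ B, ‖G a - G b‖ ≤ γ * ‖a - b‖) {u : E} (hu : u ∈ B) :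
    ‖Φ (Ψ u) - Ψ (Φ u)‖ ≤ c * (M * c + L) * h * γ := by
  obtain ⟨hv, hFv⟩ := hΦ u hu
  obtain ⟨hw, hFw⟩ := hΦ (Ψ u) (hΨ hu)
  have hγ : 0 ≤ γ := (norm_nonneg _).trans (hGbd u hu)
  have hstep : ‖u - Φ u‖ ≤ c * (h * γ) :=
    calc ‖u - Φ u‖ ≤ c * ‖F u - F (Φ u)‖ := hc _ hu _ hv
      _ = c * (h * ‖G u‖) := by
          rw [hFv, sub_add_cancel_left, norm_neg, norm_smul, Real.norm_of_nonneg hh]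
      _ ≤ c * (h * γ) := by gcongr; exact hGbd u hu
  have hshift : ‖G (Ψ u) - G u‖ ≤ γ * L :=
    (hGlip _ (hΨ hu) _ hu).trans (by gcongr; exact hΨid u hu)
  have hsplit : F (Φ (Ψ u)) - F (Ψ (Φ u)) =
      F (Ψ u) - F u - (F (Ψ (Φ u)) - F (Φ u)) + h • (G (Ψ u) - G u) := by
    rw [hFw, hFv, smul_sub]; abel
  calc ‖Φ (Ψ u) - Ψ (Φ u)‖ ≤ c * ‖F (Φ (Ψ u)) - F (Ψ (Φ u))‖ := hc _ hw _ (hΨ hv)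
    _ ≤ c * (‖F (Ψ u) - F u - (F (Ψ (Φ u)) - F (Φ u))‖ + ‖h • (G (Ψ u) - G u)‖) := by
        rw [hsplit]; gcongr; exact norm_add_le _ _
    _ ≤ c * (M * ‖u - Φ u‖ + h * ‖G (Ψ u) - G u‖) := by
        rw [norm_smul, Real.norm_of_nonneg hh]; gcongr; exact hD _ hu _ hv
    _ ≤ c * (M * (c * (h * γ)) + h * (γ * L)) := by gcongr
    _ = c * (M * c + L) * h * γ := by ring

theorem stmt_3_general (n : ℕ) (r r' γ : ℝ) (hrr' : r < r')
    (F G : EuclideanSpace ℝ (Fin n) → EuclideanSpace ℝ (Fin n))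
    (Φ : ℝ → EuclideanSpace ℝ (Fin n) → EuclideanSpace ℝ (Fin n))
    (Ψ : ℝ → EuclideanSpace ℝ (Fin n) → EuclideanSpace ℝ (Fin n))
    (DF : EuclideanSpace ℝ (Fin n) →
      (EuclideanSpace ℝ (Fin n) ≃L[ℝ] EuclideanSpace ℝ (Fin n)))
    (hF : ContDiffOn ℝ 2 F (closedBall 0 r'))
    (hDF : ∀ u ∈ closedBall (0 : EuclideanSpace ℝ (Fin n)) r',
      HasFDerivAt F (DF u : EuclideanSpace ℝ (Fin n) →L[ℝ] EuclideanSpace ℝ (Fin n)) u)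
    (hFinj : Set.InjOn F (closedBall 0 r'))
    (hγbd : ∀ u ∈ closedBall (0 : EuclideanSpace ℝ (Fin n)) r', ‖G u‖ ≤ γ)
    (hγlip : ∀ u ∈ closedBall (0 : EuclideanSpace ℝ (Fin n)) r',
      ∀ v ∈ closedBall (0 : EuclideanSpace ℝ (Fin n)) r', ‖G u - G v‖ ≤ γ * ‖u - v‖)
    (hΨ : ContDiff ℝ 2 (fun p : ℝ × EuclideanSpace ℝ (Fin n) => Ψ p.1 p.2))
    (hΨ0 : ∀ u, Ψ 0 u = u)
    (σ₁ : ℝ) (hσ₁ : 0 < σ₁)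
    (hΨball : ∀ σ : ℝ, |σ| ≤ σ₁ → ∀ u ∈ closedBall (0 : EuclideanSpace ℝ (Fin n)) r,
      Ψ σ u ∈ closedBall (0 : EuclideanSpace ℝ (Fin n)) r)
    (h₁ : ℝ) (hh₁ : 0 < h₁)
    (hΦ : ∀ h ∈ Set.Ioo (0 : ℝ) h₁, ∀ u ∈ closedBall (0 : EuclideanSpace ℝ (Fin n)) r,
      Φ h u ∈ closedBall (0 : EuclideanSpace ℝ (Fin n)) r ∧
        F (Φ h u) = F u + h • G u) :
    ∃ C > (0 : ℝ), ∃ σ₀ > (0 : ℝ), ∃ h₀ > (0 : ℝ),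
      ∀ u ∈ closedBall (0 : EuclideanSpace ℝ (Fin n)) r, ∀ σ : ℝ, |σ| ≤ σ₀ →
        ∀ h : ℝ, 0 < h → h < h₀ →
          ‖Φ h (Ψ σ u) - Ψ σ (Φ h u)‖ ≤ C * |σ| * h * γ := by
  have hBr : closedBall (0 : EuclideanSpace ℝ (Fin n)) r ⊆ ball 0 r' := closedBall_subset_ball hrr'
  have hBr' := hBr.trans ball_subset_closedBall
  obtain ⟨c, hc⟩ := (isCompact_closedBall (0 : EuclideanSpace ℝ (Fin n)) r)
    |>.exists_dist_le_mul_dist_of_hasStrictFDerivAt (hFinj.mono hBr') fun x hx =>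
      (hF.contDiffAt (closedBall_mem_nhds_of_mem (hBr hx))).hasStrictFDerivAt'
        (hDF x (hBr' hx)) two_ne_zero
  simp only [dist_eq_norm] at hc
  obtain ⟨M, hM⟩ := ((hF.mono ball_subset_closedBall).comp hΨ.contDiffOn fun _ hp => hp)
    |>.exists_norm_sub_sub_sub_le (isOpen_ball.preimage hΨ.continuous)
      (isCompact_closedBall 0 σ₁) (isCompact_closedBall 0 r) (convex_closedBall 0 r)
      fun p hp => hBr (hΨball p.1 (mem_closedBall_zero_iff.1 hp.1) p.2 hp.2)
  obtain ⟨L, hL⟩ := (hΨ.of_le one_le_two).exists_norm_sub_le_mul_norm_sub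
    (isCompact_closedBall (0 : ℝ) σ₁) (isCompact_closedBall 0 r)
  refine ⟨c * (M * c + L) + 1, by positivity, σ₁, hσ₁, h₁, hh₁, fun u hu σ hσ h hh hhh₁ => ?_⟩
  have hσP : σ ∈ closedBall (0 : ℝ) σ₁ := mem_closedBall_zero_iff.2 hσ
  have h0P : (0 : ℝ) ∈ closedBall (0 : ℝ) σ₁ := mem_closedBall_self hσ₁.le
  have hγ : 0 ≤ γ := (norm_nonneg _).trans (hγbd u (hBr' hu))
  calc ‖Φ h (Ψ σ u) - Ψ σ (Φ h u)‖ ≤ c * (M * |σ| * c + L * |σ|) * h * γ := by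
        refine norm_comp_sub_comp_le c.2 (by positivity) hh.le hc
          (hΦ h ⟨hh, hhh₁⟩) (hΨball σ hσ) (fun a ha b hb => ?_) (fun w hw => ?_)
          (fun w hw => hγbd w (hBr' hw)) (fun a ha b hb => hγlip a (hBr' ha) b (hBr' hb)) hu
        · simpa [hΨ0] using hM σ hσP 0 h0P a ha b hb
        · simpa [hΨ0] using hL σ hσP 0 h0P w hw
    _ ≤ (c * (M * c + L) + 1) * |σ| * h * γ := by
        have : 0 ≤ |σ| * h * γ := by positivity
        nlinarith

/-- Commutator estimate between the zero-wave map `Φ_h` and the elementary wave curve maps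
`Ψ[σ]`: `‖Φ_h(Ψ[σ](u)) − Ψ[σ](Φ_h(u))‖ ≤ C·|σ|·h·γ` for `u ∈ B_r(0)`, `|σ|` and `h`
sufficiently small. -/
theorem stmt_3 (n : ℕ) (r r' γ : ℝ) (hr : 0 < r) (hrr' : r < r')
    (F G : EuclideanSpace ℝ (Fin n) → EuclideanSpace ℝ (Fin n))
    (Φ : ℝ → EuclideanSpace ℝ (Fin n) → EuclideanSpace ℝ (Fin n))
    (Ψ : ℝ → EuclideanSpace ℝ (Fin n) → EuclideanSpace ℝ (Fin n))
    (DF : EuclideanSpace ℝ (Fin n) →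
      (EuclideanSpace ℝ (Fin n) ≃L[ℝ] EuclideanSpace ℝ (Fin n)))
    (hF : ContDiffOn ℝ 2 F (closedBall 0 r'))
    (hDF : ∀ u ∈ closedBall (0 : EuclideanSpace ℝ (Fin n)) r',
      HasFDerivAt F (DF u : EuclideanSpace ℝ (Fin n) →L[ℝ] EuclideanSpace ℝ (Fin n)) u)
    (hFinj : Set.InjOn F (closedBall 0 r'))
    (hG : ContDiff ℝ 2 G) (hG0 : G 0 = 0)
    (hγbd : ∀ u ∈ closedBall (0 : EuclideanSpace ℝ (Fin n)) r', ‖G u‖ ≤ γ)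
    (hγlip : ∀ u ∈ closedBall (0 : EuclideanSpace ℝ (Fin n)) r',
      ∀ v ∈ closedBall (0 : EuclideanSpace ℝ (Fin n)) r', ‖G u - G v‖ ≤ γ * ‖u - v‖)
    (hΨ : ContDiff ℝ 2 (fun p : ℝ × EuclideanSpace ℝ (Fin n) => Ψ p.1 p.2))
    (hΨ0 : ∀ u, Ψ 0 u = u)
    (σ₁ : ℝ) (hσ₁ : 0 < σ₁)
    (hΨball : ∀ σ : ℝ, |σ| ≤ σ₁ → ∀ u ∈ closedBall (0 : EuclideanSpace ℝ (Fin n)) r,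
      Ψ σ u ∈ closedBall (0 : EuclideanSpace ℝ (Fin n)) r)
    (h₁ : ℝ) (hh₁ : 0 < h₁)
    (hΦ : ∀ h ∈ Set.Ioo (0 : ℝ) h₁, ∀ u ∈ closedBall (0 : EuclideanSpace ℝ (Fin n)) r,
      Φ h u ∈ closedBall (0 : EuclideanSpace ℝ (Fin n)) r ∧
        F (Φ h u) = F u + h • G u) :
    ∃ C > (0 : ℝ), ∃ σ₀ > (0 : ℝ), ∃ h₀ > (0 : ℝ),
      ∀ u ∈ closedBall (0 : EuclideanSpace ℝ (Fin n)) r, ∀ σ : ℝ, |σ| ≤ σ₀ →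
        ∀ h : ℝ, 0 < h → h < h₀ →
          ‖Φ h (Ψ σ u) - Ψ σ (Φ h u)‖ ≤ C * |σ| * h * γ :=
  stmt_3_general n r r' γ hrr' F G Φ Ψ DF hF hDF hFinj hγbd hγlip hΨ hΨ0 σ₁ hσ₁ hΨball h₁ hh₁ hΦ
end

section
/- Suppose u*, v* ∈ B_r(0) ⊂ ℝⁿ are connected by shock curves: v* = S_n(q*_n) ∘ ⋯ ∘ S_1(q*_1)[u*] with all q*_i in a small neighborhood of 0, and b₁ : B_r(0) → ℝ^{n−m} is C¹ with det[Db₁(u)·r_{m+1}(u), …, Db₁(u)·r_n(u)] ≠ 0 on B_r(0). Then there exists C > 0 such that Σ_{j=m+1}^n |q*_j| ≤ C·( Σ_{i=1}^m |q*_i| + |b₁(u*) − b₁(v*)| ). -/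
/-!
Put `F(q, u) = b₁(S_n(q_n) ∘ ⋯ ∘ S_1(q_1)[u])`. Since `S_i(0) = id` and `∂_σ S_i(0)[u] = r_i(u)`,
the partial derivative of `F` in `q` at `(0, u)` is `e ↦ Db₁(u) (Σ_j e_j r_j(u))`, so by the
nondegeneracy of `b₁` the linear map `e ↦ (e_1, …, e_m, ∂_q F(0, u) e)` is injective, hence bounded
below. Strict differentiability of `F` transfers this lower bound to `F(q, u) - F(0, u)` for
`(q, u)` near `(0, u₀)`, and compactness of the closed ball makes the constant uniform.
-/

open Metric Filter Topology

section LocalInjectivity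

variable {E X G H : Type*} [NormedAddCommGroup E] [NormedSpace ℝ E] [FiniteDimensional ℝ E]
  [NormedAddCommGroup X] [NormedSpace ℝ X] [NormedAddCommGroup G] [NormedSpace ℝ G]
  [NormedAddCommGroup H] [NormedSpace ℝ H]

theorem HasStrictFDerivAt.exists_eventually_norm_fst_le {F : E × X → G} {D : E × X →L[ℝ] G}
    {P : E →L[ℝ] H} {u₀ : X} (hF : HasStrictFDerivAt F D (0, u₀))
    (hinj : ∀ e, P e = 0 → D (e, 0) = 0 → e = 0) :
    ∃ C > 0, ∀ᶠ x in 𝓝 ((0 : E), u₀), ‖x.1‖ ≤ C * (‖P x.1‖ + ‖F x - F (0, x.2)‖) := by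
  obtain ⟨κ, hκ, hbound⟩ : ∃ κ : ℝ, 0 < κ ∧ ∀ e, ‖e‖ ≤ κ * (‖P e‖ + ‖D (e, 0)‖) := by
    let T : E →L[ℝ] H × G := P.prod (D.comp (ContinuousLinearMap.inl ℝ E X))
    obtain ⟨c, hc0, hc⟩ := LinearMap.exists_antilipschitzWith (T : E →ₗ[ℝ] H × G)
      (LinearMap.ker_eq_bot'.2 fun e he => hinj e (congrArg Prod.fst he) (congrArg Prod.snd he))
    exact ⟨c, hc0, fun e => (T.bound_of_antilipschitz hc e).trans <| mul_le_mul_of_nonneg_left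
      (max_le_add_of_nonneg (norm_nonneg _) (norm_nonneg _)) c.2⟩
  have hpair : Tendsto (fun x : E × X => (x, ((0 : E), x.2))) (𝓝 (0, u₀)) (𝓝 ((0, u₀), (0, u₀))) :=
    (continuous_id.prodMk (continuous_const.prodMk continuous_snd)).tendsto' _ _ rfl
  -- a linearization error of at most `‖q‖ / (2κ)` costs half of the lower bound `‖q‖ / κ`
  have hsmall := (hF.isLittleO.comp_tendsto hpair).def (c := 1 / (2 * κ)) (by positivity)
  refine ⟨2 * κ, by positivity, hsmall.mono fun x hx => ?_⟩
  have hx1 : x - (0, x.2) = (x.1, 0) := by ext <;> simp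
  simp only [Function.comp_apply, hx1, Prod.norm_mk, norm_zero, norm_nonneg, sup_of_le_left] at hx
  have hD : ‖D (x.1, 0)‖ ≤ ‖F x - F (0, x.2)‖ + 1 / (2 * κ) * ‖x.1‖ :=
    (norm_le_insert' _ _).trans (add_le_add_right ((norm_sub_rev _ _).trans_le hx) _)
  have hκD := mul_le_mul_of_nonneg_left hD hκ.le
  rw [mul_add, show κ * (1 / (2 * κ) * ‖x.1‖) = ‖x.1‖ / 2 by field_simp] at hκD
  linarith [hbound x.1]

theorem IsCompact.exists_eventually_norm_le {F : E × X → G} {D : X → E × X →L[ℝ] G}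
    {P : E →L[ℝ] H} {K : Set X} (hK : IsCompact K)
    (hF : ∀ u ∈ K, HasStrictFDerivAt F (D u) (0, u))
    (hinj : ∀ u ∈ K, ∀ e, P e = 0 → D u (e, 0) = 0 → e = 0) :
    ∃ C > 0, ∀ᶠ q in 𝓝 (0 : E), ∀ u ∈ K, ‖q‖ ≤ C * (‖P q‖ + ‖F (q, u) - F (0, u)‖) := by
  refine hK.induction_on
    (p := fun t => ∃ C > 0, ∀ᶠ q in 𝓝 (0 : E), ∀ u ∈ t, ‖q‖ ≤ C * (‖P q‖ + ‖F (q, u) - F (0, u)‖))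
    ⟨1, one_pos, by simp⟩ ?_ ?_ ?_
  · rintro s t hst ⟨C, hC, ht⟩
    exact ⟨C, hC, ht.mono fun q hq u hu => hq u (hst hu)⟩
  · rintro s t ⟨C, hC, hs⟩ ⟨C', hC', ht⟩
    refine ⟨max C C', lt_max_of_lt_left hC, ?_⟩
    filter_upwards [hs, ht] with q hqs hqt u hu
    rcases hu with hu | hu
    · exact (hqs u hu).trans (by gcongr; exact le_max_left _ _)
    · exact (hqt u hu).trans (by gcongr; exact le_max_right _ _)
  · intro u₀ hu₀
    obtain ⟨C, hC, hev⟩ := (hF u₀ hu₀).exists_eventually_norm_fst_le (hinj u₀ hu₀)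
    rw [nhds_prod_eq] at hev
    obtain ⟨pq, hpq, pu, hpu, hqu⟩ := eventually_prod_iff.1 hev
    exact ⟨{u | pu u}, mem_nhdsWithin_of_mem_nhds hpu, C, hC, hpq.mono fun q hq u hu => hqu hq hu⟩

end LocalInjectivity

theorem DifferentiableAt.hasFDerivAt_coprod {E₁ E₂ F : Type*} [NormedAddCommGroup E₁]
    [NormedSpace ℝ E₁] [NormedAddCommGroup E₂] [NormedSpace ℝ E₂] [NormedAddCommGroup F]
    [NormedSpace ℝ F] {G : E₁ × E₂ → F} {x : E₁ × E₂} {A₁ : E₁ →L[ℝ] F} {A₂ : E₂ →L[ℝ] F}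
    (hG : DifferentiableAt ℝ G x) (h₁ : HasFDerivAt (fun a => G (a, x.2)) A₁ x.1)
    (h₂ : HasFDerivAt (fun b => G (x.1, b)) A₂ x.2) :
    HasFDerivAt G (A₁.coprod A₂) x := by
  have hD := hG.hasFDerivAt
  rw [← (hD.comp x.1 (hasFDerivAt_prodMk_left x.1 x.2)).unique h₁,
    ← (hD.comp x.2 (hasFDerivAt_prodMk_right x.1 x.2)).unique h₂,
    ContinuousLinearMap.coprod_comp_inl_inr]
  exact hD

section ShockComposition

variable {n : ℕ} {E : Type*} {S : Fin n → ℝ → E → E}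

variable (S) in
/-- `shockComp S k q u = S_{k-1}(q_{k-1}) ∘ ⋯ ∘ S_0(q_0) [u]`, with `0`-based indices;
it is constant in `k ≥ n`. -/
def shockComp : ℕ → (Fin n → ℝ) → E → E
  | 0 => fun _ u => u
  | k + 1 => fun q u =>
    if h : k < n then S ⟨k, h⟩ (q ⟨k, h⟩) (shockComp k q u) else shockComp k q u

theorem shockComp_succ_of_lt {k : ℕ} (h : k < n) (q : Fin n → ℝ) (u : E) :
    shockComp S (k + 1) q u = S ⟨k, h⟩ (q ⟨k, h⟩) (shockComp S k q u) :=
  dif_pos h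

theorem shockComp_succ_of_le {k : ℕ} (h : n ≤ k) (q : Fin n → ℝ) (u : E) :
    shockComp S (k + 1) q u = shockComp S k q u :=
  dif_neg (Nat.not_lt.2 h)

theorem shockComp_zero_strength (hS0 : ∀ i u, S i 0 u = u) (k : ℕ) (u : E) :
    shockComp S k 0 u = u := by
  induction k with
  | zero => rfl
  | succ k ih =>
    by_cases h : k < n
    · rw [shockComp_succ_of_lt h, ih, Pi.zero_apply, hS0]
    · rw [shockComp_succ_of_le (Nat.le_of_not_lt h), ih]

theorem eq_shockComp_of_chain {q : Fin n → ℝ} {w : ℕ → E}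
    (hw : ∀ i : Fin n, w (i + 1) = S i (q i) (w i)) {k : ℕ} (hk : k ≤ n) :
    w k = shockComp S k q (w 0) := by
  induction k with
  | zero => rfl
  | succ k ih => rw [shockComp_succ_of_lt hk, ← ih (Nat.le_of_succ_le hk), ← hw ⟨k, hk⟩]

variable [NormedAddCommGroup E] [NormedSpace ℝ E]

theorem contDiff_shockComp {N : WithTop ℕ∞}
    (hS : ∀ i, ContDiff ℝ N (fun p : ℝ × E => S i p.1 p.2)) (k : ℕ) :
    ContDiff ℝ N (fun p : (Fin n → ℝ) × E => shockComp S k p.1 p.2) := by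
  induction k with
  | zero => exact contDiff_snd
  | succ k ih =>
    by_cases h : k < n
    · simp only [shockComp_succ_of_lt h]
      exact (hS _).comp (((contDiff_apply ℝ ℝ _).comp contDiff_fst).prodMk ih)
    · simpa only [shockComp_succ_of_le (Nat.le_of_not_lt h)] using ih

theorem hasFDerivAt_shockComp_strength
    {r : Fin n → E → E} (hS : ∀ i, Differentiable ℝ (fun p : ℝ × E => S i p.1 p.2))
    (hS0 : ∀ i u, S i 0 u = u) (hr : ∀ i u, HasDerivAt (fun σ => S i σ u) (r i u) 0) (u₀ : E)
    (k : ℕ) :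
    HasFDerivAt (fun q => shockComp S k q u₀)
      (∑ j ∈ Finset.univ.filter (fun j : Fin n => (j : ℕ) < k),
        (ContinuousLinearMap.proj (R := ℝ) j).smulRight (r j u₀)) 0 := by
  induction k with
  | zero =>
    simp only [Nat.not_lt_zero, Finset.filter_false, Finset.sum_empty]
    exact hasFDerivAt_const u₀ (0 : Fin n → ℝ)
  | succ k ih =>
    by_cases h : k < n
    · have hSk : HasFDerivAt (fun p : ℝ × E => S ⟨k, h⟩ p.1 p.2)
          (((1 : ℝ →L[ℝ] ℝ).smulRight (r ⟨k, h⟩ u₀)).coprod (ContinuousLinearMap.id ℝ E))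
          (0, shockComp S k 0 u₀) := by
        rw [shockComp_zero_strength hS0]
        exact (hS _ _).hasFDerivAt_coprod (hr _ _).hasFDerivAt
          (by simp only [hS0]; exact hasFDerivAt_id u₀)
      have hcomp := hSk.comp (0 : Fin n → ℝ) ((hasFDerivAt_apply ⟨k, h⟩ 0).prodMk ih)
      have hfilter : Finset.univ.filter (fun j : Fin n => (j : ℕ) < k + 1) =
          insert ⟨k, h⟩ (Finset.univ.filter (fun j : Fin n => (j : ℕ) < k)) := by
        ext j; simp [Fin.ext_iff]; omega
      simp only [shockComp_succ_of_lt h, hfilter]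
      rw [Finset.sum_insert (by simp)]
      refine hcomp.congr_fderiv ?_
      ext e
      simp
    · have hfilter : Finset.univ.filter (fun j : Fin n => (j : ℕ) < k + 1) =
          Finset.univ.filter (fun j : Fin n => (j : ℕ) < k) :=
        Finset.filter_congr fun j _ => by omega
      simpa only [shockComp_succ_of_le (Nat.le_of_not_lt h), hfilter] using ih

theorem fderiv_comp_shockComp_inl_apply {G : Type*} [NormedAddCommGroup G] [NormedSpace ℝ G]
    {b : E → G} {r : Fin n → E → E} (hS : ∀ i, Differentiable ℝ (fun p : ℝ × E => S i p.1 p.2))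
    (hS0 : ∀ i u, S i 0 u = u) (hr : ∀ i u, HasDerivAt (fun σ => S i σ u) (r i u) 0) {u₀ : E}
    (hb : DifferentiableAt ℝ b u₀)
    (hF : DifferentiableAt ℝ (fun p : (Fin n → ℝ) × E => b (shockComp S n p.1 p.2)) (0, u₀))
    (e : Fin n → ℝ) :
    fderiv ℝ (fun p : (Fin n → ℝ) × E => b (shockComp S n p.1 p.2)) (0, u₀) (e, 0) =
      fderiv ℝ b u₀ (∑ j, e j • r j u₀) := by
  have hb' : HasFDerivAt b (fderiv ℝ b u₀) (shockComp S n 0 u₀) := by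
    rw [shockComp_zero_strength hS0]
    exact hb.hasFDerivAt
  have h₁ :=
    hF.hasFDerivAt.comp (0 : Fin n → ℝ) (hasFDerivAt_prodMk_left (𝕜 := ℝ) (0 : Fin n → ℝ) u₀)
  have h₂ := hb'.comp (0 : Fin n → ℝ) (hasFDerivAt_shockComp_strength hS hS0 hr u₀ n)
  have hall : Finset.univ.filter (fun j : Fin n => (j : ℕ) < n) = Finset.univ :=
    Finset.filter_true_of_mem fun j _ => j.2
  simpa [hall] using congr($(h₁.unique h₂) e)

end ShockComposition

theorem eq_zero_of_sum_smul_eq_zero_of_injective_tail {R M : Type*} [Semiring R]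
    [AddCommMonoid M] [Module R M] {n m : ℕ} {v : Fin n → M}
    (hv : Function.Injective (fun c : Fin (n - m) → R =>
      ∑ j : Fin (n - m), c j • v ⟨m + (j : ℕ), Nat.add_lt_of_lt_sub' j.2⟩))
    {e : Fin n → R} (he : ∀ i : Fin n, (i : ℕ) < m → e i = 0) (hsum : ∑ i, e i • v i = 0) :
    e = 0 := by
  let tail : Fin (n - m) → Fin n := fun j => ⟨m + (j : ℕ), Nat.add_lt_of_lt_sub' j.2⟩
  have htail : (fun j => e (tail j)) = 0 := hv <| by
    simp only [Pi.zero_apply, zero_smul, Finset.sum_const_zero]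
    rw [← hsum]
    refine Fintype.sum_of_injective tail (fun j k hjk => ?_) _ _ (fun i hi => ?_) fun j => rfl
    · simpa [tail, Fin.ext_iff] using hjk
    · have him : (i : ℕ) < m := by
        by_contra h
        exact hi ⟨⟨i - m, by omega⟩, by ext; simp [tail]; omega⟩
      rw [he i him, zero_smul]
  funext i
  by_cases hi : (i : ℕ) < m
  · exact he i hi
  · have := congrFun htail ⟨i - m, by omega⟩
    simp only [tail, Pi.zero_apply] at this
    rwa [show (⟨m + (i - m), _⟩ : Fin n) = i by ext; simp; omega] at this

def headProj (n m : ℕ) : (Fin n → ℝ) →L[ℝ] ({i : Fin n // (i : ℕ) < m} → ℝ) :=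
  ContinuousLinearMap.pi fun i => ContinuousLinearMap.proj (i : Fin n)

theorem headProj_apply_eq_zero {n m : ℕ} {q : Fin n → ℝ} (hq : headProj n m q = 0) (i : Fin n)
    (hi : (i : ℕ) < m) : q i = 0 :=
  congrFun hq ⟨i, hi⟩

theorem norm_headProj_le {n m : ℕ} (q : Fin n → ℝ) :
    ‖headProj n m q‖ ≤ ∑ i ∈ Finset.univ.filter (fun i : Fin n => (i : ℕ) < m), |q i| :=
  (pi_norm_le_iff_of_nonneg (Finset.sum_nonneg fun _ _ => abs_nonneg _)).2 fun i =>
    (Real.norm_eq_abs _).trans_le <| Finset.single_le_sum (f := fun i => |q i|)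
      (fun _ _ => abs_nonneg _) (by simpa using i.2)

theorem sum_abs_filter_le_card_mul_norm {n : ℕ} (p : Fin n → Prop) [DecidablePred p]
    (q : Fin n → ℝ) : ∑ i ∈ Finset.univ.filter p, |q i| ≤ n * ‖q‖ :=
  calc ∑ i ∈ Finset.univ.filter p, |q i|
      ≤ ∑ i ∈ Finset.univ.filter p, ‖q‖ :=
        Finset.sum_le_sum fun i _ => (Real.norm_eq_abs _).symm.trans_le (norm_le_pi_norm q i)
    _ ≤ ∑ _i : Fin n, ‖q‖ :=
        Finset.sum_le_sum_of_subset_of_nonneg (Finset.filter_subset _ _)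
          fun _ _ _ => norm_nonneg _
    _ = n * ‖q‖ := by simp

/-- Boundary comparison lemma: if `v* = S_n(q*_n)∘⋯∘S_1(q*_1)[u*]` with all `q*_i` small,
and the boundary function `b₁` satisfies the nondegeneracy condition
`det[Db₁(u)·r_{m+1}(u),…,Db₁(u)·r_n(u)] ≠ 0`, then
`Σ_{j>m} |q*_j| ≤ C(Σ_{i≤m} |q*_i| + |b₁(u*) − b₁(v*)|)`. -/
theorem stmt_15 (n m : ℕ) (r : ℝ)
    (S : Fin n → ℝ → EuclideanSpace ℝ (Fin n) → EuclideanSpace ℝ (Fin n))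
    (rvec : Fin n → EuclideanSpace ℝ (Fin n) → EuclideanSpace ℝ (Fin n))
    (b₁ : EuclideanSpace ℝ (Fin n) → EuclideanSpace ℝ (Fin (n - m)))
    (hS : ∀ i, ContDiff ℝ 2 (fun p : ℝ × EuclideanSpace ℝ (Fin n) => S i p.1 p.2))
    (hS0 : ∀ i u, S i 0 u = u)
    (hSderiv : ∀ i u, HasDerivAt (fun σ => S i σ u) (rvec i u) 0)
    (hb₁ : ContDiff ℝ 1 b₁)
    (hnd : ∀ u ∈ closedBall (0 : EuclideanSpace ℝ (Fin n)) r,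
      Function.Bijective (fun c : Fin (n - m) → ℝ =>
        ∑ j : Fin (n - m), c j •
          fderiv ℝ b₁ u (rvec (⟨m + (j : ℕ), by have := j.2; omega⟩ : Fin n) u))) :
    ∃ C > (0 : ℝ), ∃ δ > (0 : ℝ),
      ∀ (ustar vstar : EuclideanSpace ℝ (Fin n)) (q : Fin n → ℝ) (w : ℕ → EuclideanSpace ℝ (Fin n)),
        ustar ∈ closedBall (0 : EuclideanSpace ℝ (Fin n)) r →
        vstar ∈ closedBall (0 : EuclideanSpace ℝ (Fin n)) r →
        (∀ i, |q i| ≤ δ) →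
        w 0 = ustar → w n = vstar →
        (∀ i : Fin n, w ((i : ℕ) + 1) = S i (q i) (w (i : ℕ))) →
        (∑ i ∈ Finset.univ.filter (fun i : Fin n => m ≤ (i : ℕ)), |q i|) ≤
          C * ((∑ i ∈ Finset.univ.filter (fun i : Fin n => (i : ℕ) < m), |q i|) +
            ‖b₁ ustar - b₁ vstar‖) := by
  have hS1 : ∀ i, ContDiff ℝ 1 (fun p : ℝ × EuclideanSpace ℝ (Fin n) => S i p.1 p.2) :=
    fun i => (hS i).of_le one_le_two
  set F := fun p : (Fin n → ℝ) × EuclideanSpace ℝ (Fin n) => b₁ (shockComp S n p.1 p.2)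
  have hF : ContDiff ℝ 1 F := hb₁.comp (contDiff_shockComp hS1 n)
  have hinj : ∀ u ∈ closedBall (0 : EuclideanSpace ℝ (Fin n)) r, ∀ e,
      headProj n m e = 0 → fderiv ℝ F (0, u) (e, 0) = 0 → e = 0 := by
    intro u hu e he hDe
    rw [fderiv_comp_shockComp_inl_apply (fun i => (hS1 i).differentiable one_ne_zero) hS0 hSderiv
      (hb₁.differentiable one_ne_zero u) (hF.differentiable one_ne_zero _), map_sum] at hDe
    simp only [map_smul] at hDe
    exact eq_zero_of_sum_smul_eq_zero_of_injective_tail (hnd u hu).injective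
      (headProj_apply_eq_zero he) hDe
  obtain ⟨C, hC, hev⟩ := (isCompact_closedBall _ r).exists_eventually_norm_le
    (fun u _ => hF.contDiffAt.hasStrictFDerivAt one_ne_zero) hinj
  obtain ⟨ε, hε, hball⟩ := Metric.eventually_nhds_iff.1 hev
  refine ⟨n * C + 1, by positivity, ε / 2, by positivity, ?_⟩
  rintro _ _ q w hu - hq rfl rfl hw
  have hqε : ‖q‖ ≤ ε / 2 := (pi_norm_le_iff_of_nonneg (by positivity)).2 fun i =>
    (Real.norm_eq_abs _).trans_le (hq i)
  have key := hball (show dist q 0 < ε by rw [dist_zero_right]; linarith) (w 0) hu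
  simp only [F, shockComp_zero_strength hS0, ← eq_shockComp_of_chain hw le_rfl] at key
  rw [norm_sub_rev] at key
  calc _ ≤ n * ‖q‖ := sum_abs_filter_le_card_mul_norm _ q
    _ ≤ n * (C * ((∑ i ∈ Finset.univ.filter (fun i : Fin n => (i : ℕ) < m), |q i|) +
          ‖b₁ (w 0) - b₁ (w n)‖)) := by
        gcongr
        exact key.trans (by gcongr; exact norm_headProj_le q)
    _ ≤ _ := by
        rw [← mul_assoc]
        exact mul_le_mul_of_nonneg_right (by linarith) (by positivity)
end

section
/- Let E_{b,i}(t) = W_i(t,0+)·|q̃ᵇ_i(t)|·λ_i(t,0+) with λ_i(t,0+) ≤ −c < 0 for i ≤ m, W_i ≥ 1, and q̃ᵇ_i = K̄ q_i^b for i ≤ m, q̃ᵇ_i = q_i^b for i > m. Suppose Σ_{j=m+1}^n |q^b_j| ≤ C(Σ_{i=1}^m |q^b_i| + |b₁(u) − b₁(v)|). Then if K̄ ≥ C/c (for an appropriately enlarged C), Σ_{i=1}^n E_{b,i}(t) ≤ C·|b₁(u(t,0+)) − b₁(v(t,0+))|. -/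
/-- Boundary-term estimate: with `λᵢ ≤ −c < 0` for `i ≤ m`, weights `Wᵢ ≥ 1`, and the
boundary comparison `Σ_{j>m}|qᵇⱼ| ≤ C₀(Σ_{i≤m}|qᵇᵢ| + |b₁(u)−b₁(v)|)`, there is an
enlarged constant `C` such that whenever `K̄ ≥ C/c`, the boundary flux satisfies
`Σᵢ E_{b,i} = Σᵢ Wᵢ|q̃ᵇᵢ|λᵢ ≤ C·|b₁(u)−b₁(v)|`, where `q̃ᵇᵢ = K̄ qᵇᵢ` for `i ≤ m` and
`q̃ᵇᵢ = qᵇᵢ` for `i > m`. -/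
theorem stmt_19 (n m : ℕ) (c Λ C₀ : ℝ) (hc : 0 < c) (hΛ : 0 ≤ Λ) (hC₀ : 0 < C₀)
    (lam W : Fin n → ℝ)
    (hW : ∀ i, 1 ≤ W i)
    (hneg : ∀ i : Fin n, (i : ℕ) < m → lam i ≤ -c)
    (hbd : ∀ i : Fin n, lam i ≤ Λ) :
    ∃ C > (0 : ℝ), ∀ (Kbar B : ℝ) (qb : Fin n → ℝ),
      0 ≤ B → Kbar ≥ C / c →
      (∑ i ∈ Finset.univ.filter (fun i : Fin n => m ≤ (i : ℕ)), |qb i|) ≤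
        C₀ * ((∑ i ∈ Finset.univ.filter (fun i : Fin n => (i : ℕ) < m), |qb i|) + B) →
      (∑ i : Fin n,
          W i * |(if (i : ℕ) < m then Kbar * qb i else qb i)| * lam i) ≤ C * B := by
  set M : ℝ := ∑ j : Fin n, W j with hMdef
  have hWn : ∀ j : Fin n, (0:ℝ) ≤ W j := fun j => le_trans zero_le_one (hW j)
  have hM0 : 0 ≤ M := Finset.sum_nonneg fun j _ => hWn j
  have hWle : ∀ i : Fin n, W i ≤ M := fun i =>
    Finset.single_le_sum (f := W) (fun j _ => hWn j) (Finset.mem_univ i)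
  refine ⟨M * Λ * C₀ + 1, by positivity, ?_⟩
  intro Kbar B qb hB hK hcmp
  have hKc : M * Λ * C₀ + 1 ≤ c * Kbar := by
    rw [ge_iff_le, div_le_iff₀ hc] at hK
    linarith
  have hMΛC : 0 ≤ M * Λ * C₀ := by positivity
  have hcK : 0 < c * Kbar := by linarith
  have hK0 : 0 ≤ Kbar := by nlinarith [hcK, hc]
  rw [← Finset.sum_filter_add_sum_filter_not Finset.univ (fun i : Fin n => (i : ℕ) < m)]
  set S₁ : ℝ := ∑ i ∈ Finset.univ.filter (fun i : Fin n => (i : ℕ) < m), |qb i| with hS₁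
  set S₂ : ℝ := ∑ i ∈ Finset.univ.filter (fun i : Fin n => m ≤ (i : ℕ)), |qb i| with hS₂
  have hS₁0 : 0 ≤ S₁ := Finset.sum_nonneg fun i _ => abs_nonneg _
  have h1 : (∑ i ∈ Finset.univ.filter (fun i : Fin n => (i : ℕ) < m),
      W i * |(if (i : ℕ) < m then Kbar * qb i else qb i)| * lam i) ≤ -(c * Kbar) * S₁ := by
    rw [hS₁, Finset.mul_sum]
    refine Finset.sum_le_sum fun i hi => ?_
    have him : (i : ℕ) < m := (Finset.mem_filter.mp hi).2
    rw [if_pos him, abs_mul, abs_of_nonneg hK0]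
    have hl := hneg i him
    have hq := abs_nonneg (qb i)
    have hX : 0 ≤ Kbar * |qb i| := mul_nonneg hK0 hq
    have h1' : Kbar * |qb i| * lam i ≤ Kbar * |qb i| * (-c) := by
      nlinarith [mul_le_mul_of_nonneg_left hl hX]
    have hY0 : Kbar * |qb i| * lam i ≤ 0 := h1'.trans (by nlinarith [mul_nonneg hX hc.le])
    have h2' : W i * (Kbar * |qb i| * lam i) ≤ Kbar * |qb i| * lam i := by
      nlinarith [hW i, hY0, mul_nonpos_of_nonneg_of_nonpos (sub_nonneg.mpr (hW i)) hY0]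
    nlinarith [h1', h2']
  have h2 : (∑ i ∈ Finset.univ.filter (fun i : Fin n => ¬ (i : ℕ) < m),
      W i * |(if (i : ℕ) < m then Kbar * qb i else qb i)| * lam i) ≤ M * Λ * S₂ := by
    have hset : Finset.univ.filter (fun i : Fin n => ¬ (i : ℕ) < m)
        = Finset.univ.filter (fun i : Fin n => m ≤ (i : ℕ)) := by
      apply Finset.filter_congr; intro i _; simp [not_lt]
    rw [hset, hS₂, Finset.mul_sum]
    refine Finset.sum_le_sum fun i hi => ?_
    have him : m ≤ (i : ℕ) := (Finset.mem_filter.mp hi).2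
    rw [if_neg (not_lt.mpr him)]
    have hq := abs_nonneg (qb i)
    calc W i * |qb i| * lam i ≤ W i * |qb i| * Λ :=
          mul_le_mul_of_nonneg_left (hbd i) (mul_nonneg (hWn i) hq)
      _ ≤ M * |qb i| * Λ :=
          mul_le_mul_of_nonneg_right (mul_le_mul_of_nonneg_right (hWle i) hq) hΛ
      _ = M * Λ * |qb i| := by ring
  have hS₂le : S₂ ≤ C₀ * (S₁ + B) := hcmp
  nlinarith [mul_le_mul_of_nonneg_left hS₂le hMΛC, mul_le_mul_of_nonneg_right hKc hS₁0]
end
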